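/- For every ε > 0, almost surely n^{−ε}·sup_{x∈ℤ^d} N_n(x) → 0 as n → ∞, where N_n(x) is the occupation time of the transient random walk (S_n). -/

import Mathlib

/-!
Moment method. Call a chain a sequence of times `a₀ < ⋯ < aₘ` at which the walk takes one and
the same value. The last step `S_{aₘ} = S_{aₘ₋₁}` of a chain depends only on the increments
after `aₘ₋₁`, so independence and stationarity of the increments bound the expected number of
chains ending at a given time by `Gᵐ`, where `G = ∑ₖ P(S_{k+1} = 0)` is finite by transience.
A site visited more than `n^ε` times before time `n` carries about `n^{ε(m+1)}/(m+1)!` chains,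
so by Markov's inequality this has probability `O(n^{1-ε(m+1)})`, which is summable once
`ε(m+1) > 2`. By Borel–Cantelli, almost surely `sup_x N_n(x) ≤ n^{ε/2}` for all large `n`.
-/

open MeasureTheory ProbabilityTheory Filter Finset
open scoped ENNReal

lemma sum_choose_card_filter_range (p : ℕ → Prop) [DecidablePred p] (m b : ℕ) :
    ∑ a ∈ range b with p a, (#{j ∈ range a | p j}).choose m =
      (#{a ∈ range b | p a}).choose (m + 1) := by
  induction b with
  | zero => simp
  | succ b ih =>
    rw [range_add_one, filter_insert]
    by_cases hb : p b
    · rw [if_pos hb, sum_insert (by simp), card_insert_of_notMem (by simp), ih,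
        Nat.choose_succ_succ', add_comm]
    · simp only [if_neg hb, ih]

lemma iSup_comap_le {Ω β : Type*} [mΩ : MeasurableSpace Ω] [mβ : MeasurableSpace β]
    {X : ℕ → Ω → β} (hmeas : ∀ i, Measurable (X i)) (I : Set ℕ) :
    (⨆ i ∈ I, mβ.comap (X i)) ≤ mΩ :=
  iSup₂_le fun i _ ↦ (hmeas i).comap_le

section Chains

variable {Ω β : Type*}

/-- `chainCount S m b ω` counts the chains `a₀ < a₁ < ⋯ < aₘ = b` with `S aᵢ ω` constant. -/
noncomputable def chainCount (S : ℕ → Ω → β) : ℕ → ℕ → Ω → ℝ≥0∞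
  | 0, _, _ => 1
  | m + 1, b, ω => ∑ a ∈ range b, chainCount S m a ω * {ω | S a ω = S b ω}.indicator 1 ω

lemma choose_card_le_chainCount [DecidableEq β] (S : ℕ → Ω → β) (ω : Ω) (m b : ℕ) :
    ((#{a ∈ range b | S a ω = S b ω}).choose m : ℝ≥0∞) ≤ chainCount S m b ω := by
  induction m generalizing b with
  | zero => simp [chainCount]
  | succ m ih =>
    rw [← sum_choose_card_filter_range, chainCount]
    push_cast
    calc ∑ a ∈ range b with S a ω = S b ω, ((#{j ∈ range a | S j ω = S b ω}).choose m : ℝ≥0∞)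
        ≤ ∑ a ∈ range b with S a ω = S b ω,
            chainCount S m a ω * {ω | S a ω = S b ω}.indicator 1 ω :=
          sum_le_sum fun a ha ↦ by
            have hab : S a ω = S b ω := (mem_filter.1 ha).2
            simpa [hab] using ih a
      _ ≤ _ := sum_le_sum_of_subset (filter_subset _ _)

lemma choose_card_le_sum_chainCount [DecidableEq β] (S : ℕ → Ω → β) (ω : Ω) (x : β) (m n : ℕ) :
    ((#{i ∈ Icc 1 n | S i ω = x}).choose (m + 1) : ℝ≥0∞) ≤
      ∑ b ∈ range (n + 1), chainCount S m b ω := by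
  calc ((#{i ∈ Icc 1 n | S i ω = x}).choose (m + 1) : ℝ≥0∞)
      ≤ (#{i ∈ range (n + 1) | S i ω = x}).choose (m + 1) := by
        gcongr
        intro i
        simp only [mem_Icc, mem_range]
        omega
    _ = ∑ b ∈ range (n + 1) with S b ω = x, ((#{a ∈ range b | S a ω = x}).choose m : ℝ≥0∞) := by
        rw [← sum_choose_card_filter_range]
        push_cast
        rfl
    _ ≤ ∑ b ∈ range (n + 1) with S b ω = x, chainCount S m b ω :=
        sum_le_sum fun b hb ↦ by
          rw [← (mem_filter.1 hb).2]
          exact choose_card_le_chainCount S ω m b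
    _ ≤ _ := sum_le_sum_of_subset (filter_subset _ _)

end Chains

section RandomWalk

variable {Ω β : Type*} [AddCommGroup β] {X S : ℕ → Ω → β}

lemma setOf_eq_eq_setOf_sum_Ico_eq_zero (hS : ∀ n ω, S n ω = ∑ i ∈ range n, X i ω) {a b : ℕ}
    (hab : a ≤ b) : {ω | S a ω = S b ω} = {ω | ∑ i ∈ Ico a b, X i ω = 0} := by
  ext ω
  simp [hS, ← sum_range_add_sum_Ico _ hab]

variable [mβ : MeasurableSpace β] [MeasurableSingletonClass β] [Countable β]

lemma measurable_sum_iSup_comap {I : Set ℕ} {s : Finset ℕ} (hs : ↑s ⊆ I) :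
    Measurable[⨆ i ∈ I, mβ.comap (X i)] fun ω ↦ ∑ i ∈ s, X i ω :=
  Finset.measurable_sum _ fun i hi ↦
    (comap_measurable (X i)).mono (le_iSup₂ (f := fun j (_ : j ∈ I) ↦ mβ.comap (X j)) i (hs hi))
      le_rfl

lemma measurable_chainCount (hS : ∀ n ω, S n ω = ∑ i ∈ range n, X i ω) (m b : ℕ) :
    Measurable[⨆ i ∈ Set.Iio b, mβ.comap (X i)] (chainCount S m b) := by
  induction m generalizing b with
  | zero => exact measurable_const
  | succ m ih =>
    refine Finset.measurable_sum _ fun a ha ↦ ?_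
    have hab : a < b := mem_range.1 ha
    have hpast : (⨆ i ∈ Set.Iio a, mβ.comap (X i)) ≤ ⨆ i ∈ Set.Iio b, mβ.comap (X i) :=
      biSup_mono fun i hi ↦ lt_trans hi hab
    have hSm : ∀ c ≤ b, Measurable[⨆ i ∈ Set.Iio b, mβ.comap (X i)] (S c) := fun c hc ↦ by
      rw [show S c = fun ω ↦ ∑ i ∈ range c, X i ω from funext (hS c)]
      exact measurable_sum_iSup_comap fun i hi ↦ by
        simp only [coe_range, Set.mem_Iio] at hi ⊢
        omega
    exact ((ih a).mono hpast le_rfl).mul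
      (measurable_const.indicator (measurableSet_eq_fun (hSm a hab.le) (hSm b le_rfl)))

variable [MeasurableSpace Ω] {P : Measure Ω}

lemma identDistrib_sum_Ico (hmeas : ∀ i, Measurable (X i)) (hindep : iIndepFun X P)
    (hident : ∀ i, P.map (X i) = P.map (X 0)) (a b : ℕ) :
    IdentDistrib (fun ω ↦ ∑ i ∈ Ico a b, X i ω) (fun ω ↦ ∑ i ∈ range (b - a), X i ω) P P := by
  have hshift : IdentDistrib (fun ω i ↦ X (a + i) ω) (fun ω i ↦ X i ω) P P :=
    .pi (fun i ↦ ⟨(hmeas _).aemeasurable, (hmeas _).aemeasurable, by rw [hident, hident i]⟩)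
      (hindep.precomp (add_right_injective a)) hindep
  have hsum : Measurable fun v : ℕ → β ↦ ∑ i ∈ range (b - a), v i :=
    Finset.measurable_sum _ fun i _ ↦ measurable_pi_apply i
  simpa [Function.comp_def, Finset.sum_Ico_eq_sum_range] using hshift.comp hsum

lemma measure_setOf_eq_eq_measure_sub (hmeas : ∀ i, Measurable (X i)) (hindep : iIndepFun X P)
    (hident : ∀ i, P.map (X i) = P.map (X 0)) (hS : ∀ n ω, S n ω = ∑ i ∈ range n, X i ω)
    {a b : ℕ} (hab : a ≤ b) : P {ω | S a ω = S b ω} = P {ω | S (b - a) ω = 0} := by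
  rw [setOf_eq_eq_setOf_sum_Ico_eq_zero hS hab]
  simp_rw [hS]
  exact (identDistrib_sum_Ico hmeas hindep hident a b).measure_mem_eq (measurableSet_singleton 0)

lemma lintegral_chainCount_mul_indicator (hmeas : ∀ i, Measurable (X i))
    (hindep : iIndepFun X P) (hident : ∀ i, P.map (X i) = P.map (X 0))
    (hS : ∀ n ω, S n ω = ∑ i ∈ range n, X i ω) (m : ℕ) {a b : ℕ} (hab : a ≤ b) :
    ∫⁻ ω, chainCount S m a ω * {ω | S a ω = S b ω}.indicator 1 ω ∂P =
      (∫⁻ ω, chainCount S m a ω ∂P) * P {ω | S (b - a) ω = 0} := by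
  have hblock : MeasurableSet[⨆ i ∈ Set.Ico a b, mβ.comap (X i)] {ω | S a ω = S b ω} := by
    rw [setOf_eq_eq_setOf_sum_Ico_eq_zero hS hab]
    exact measurable_sum_iSup_comap (by simp) (measurableSet_singleton 0)
  have hind : Measurable[⨆ i ∈ Set.Ico a b, mβ.comap (X i)]
      ({ω | S a ω = S b ω}.indicator (1 : Ω → ℝ≥0∞)) :=
    measurable_const.indicator hblock
  have hpast_block :
      Indep (⨆ i ∈ Set.Iio a, mβ.comap (X i)) (⨆ i ∈ Set.Ico a b, mβ.comap (X i)) P :=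
    indep_iSup_of_disjoint (fun i ↦ (hmeas i).comap_le) hindep.iIndep
      (Set.disjoint_left.2 fun i hi hi' ↦ (Set.mem_Iio.1 hi).not_ge (Set.mem_Ico.1 hi').1)
  rw [lintegral_mul_eq_lintegral_mul_lintegral_of_independent_measurableSpace
    (iSup_comap_le hmeas _) (iSup_comap_le hmeas _) hpast_block (measurable_chainCount hS m a) hind,
    lintegral_indicator_one (iSup_comap_le hmeas _ _ hblock),
    measure_setOf_eq_eq_measure_sub hmeas hindep hident hS hab]

lemma lintegral_chainCount_le [IsProbabilityMeasure P] (hmeas : ∀ i, Measurable (X i))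
    (hindep : iIndepFun X P) (hident : ∀ i, P.map (X i) = P.map (X 0))
    (hS : ∀ n ω, S n ω = ∑ i ∈ range n, X i ω) (m b : ℕ) :
    ∫⁻ ω, chainCount S m b ω ∂P ≤ (∑' k, P {ω | S (k + 1) ω = 0}) ^ m := by
  set G := ∑' k, P {ω | S (k + 1) ω = 0}
  have hSmeas (c : ℕ) : Measurable (S c) := by
    rw [show S c = fun ω ↦ ∑ i ∈ range c, X i ω from funext (hS c)]
    exact Finset.measurable_sum _ fun i _ ↦ hmeas i
  induction m generalizing b with
  | zero => simp [chainCount]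
  | succ m ih =>
    have hreturn : ∑ a ∈ range b, P {ω | S (b - a) ω = 0} ≤ G := by
      rw [← sum_range_reflect]
      calc ∑ a ∈ range b, P {ω | S (b - (b - 1 - a)) ω = 0}
          = ∑ k ∈ range b, P {ω | S (k + 1) ω = 0} :=
            sum_congr rfl fun a ha ↦ by rw [show b - (b - 1 - a) = a + 1 by grind]
        _ ≤ G := ENNReal.sum_le_tsum _
    calc ∫⁻ ω, chainCount S (m + 1) b ω ∂P
        = ∑ a ∈ range b, ∫⁻ ω, chainCount S m a ω * {ω | S a ω = S b ω}.indicator 1 ω ∂P :=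
          lintegral_finsetSum' _ fun a _ ↦
            ((measurable_chainCount hS m a).mono (iSup_comap_le hmeas _) le_rfl).aemeasurable.mul
              (aemeasurable_const.indicator (measurableSet_eq_fun (hSmeas a) (hSmeas b)))
      _ = ∑ a ∈ range b, (∫⁻ ω, chainCount S m a ω ∂P) * P {ω | S (b - a) ω = 0} :=
          sum_congr rfl fun a ha ↦
            lintegral_chainCount_mul_indicator hmeas hindep hident hS m (mem_range.1 ha).le
      _ ≤ ∑ a ∈ range b, G ^ m * P {ω | S (b - a) ω = 0} := by gcongr with a; exact ih a
      _ ≤ G ^ (m + 1) := by rw [← mul_sum, pow_succ]; exact mul_le_mul_right hreturn _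

lemma choose_mul_measure_exists_card_ge_le [IsProbabilityMeasure P] [DecidableEq β]
    (hmeas : ∀ i, Measurable (X i)) (hindep : iIndepFun X P)
    (hident : ∀ i, P.map (X i) = P.map (X 0)) (hS : ∀ n ω, S n ω = ∑ i ∈ range n, X i ω)
    (k m n : ℕ) :
    (k.choose (m + 1) : ℝ≥0∞) * P {ω | ∃ x, k ≤ #{i ∈ Icc 1 n | S i ω = x}} ≤
      (n + 1) * (∑' k, P {ω | S (k + 1) ω = 0}) ^ m := by
  have hchain (b : ℕ) : Measurable (chainCount S m b) :=
    (measurable_chainCount hS m b).mono (iSup_comap_le hmeas _) le_rfl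
  have hsub : {ω | ∃ x, k ≤ #{i ∈ Icc 1 n | S i ω = x}} ⊆
      {ω | (k.choose (m + 1) : ℝ≥0∞) ≤ ∑ b ∈ range (n + 1), chainCount S m b ω} := by
    rintro ω ⟨x, hx⟩
    exact (Nat.cast_le.2 (Nat.choose_le_choose _ hx)).trans
      (choose_card_le_sum_chainCount S ω x m n)
  calc (k.choose (m + 1) : ℝ≥0∞) * P {ω | ∃ x, k ≤ #{i ∈ Icc 1 n | S i ω = x}}
      ≤ k.choose (m + 1) *
          P {ω | (k.choose (m + 1) : ℝ≥0∞) ≤ ∑ b ∈ range (n + 1), chainCount S m b ω} := by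
        gcongr
    _ ≤ ∫⁻ ω, ∑ b ∈ range (n + 1), chainCount S m b ω ∂P :=
        mul_meas_ge_le_lintegral (Finset.measurable_sum _ fun b _ ↦ hchain b) _
    _ = ∑ b ∈ range (n + 1), ∫⁻ ω, chainCount S m b ω ∂P :=
        lintegral_finsetSum _ fun b _ ↦ hchain b
    _ ≤ ∑ b ∈ range (n + 1), (∑' k, P {ω | S (k + 1) ω = 0}) ^ m :=
        sum_le_sum fun b _ ↦ lintegral_chainCount_le hmeas hindep hident hS m b
    _ = (n + 1) * (∑' k, P {ω | S (k + 1) ω = 0}) ^ m := by simp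

lemma pow_div_factorial_le_choose_floor_add_one {y : ℝ} {r : ℕ} (hy : 2 * r ≤ y) :
    (y / 2) ^ r / r.factorial ≤ ((⌊y⌋₊ + 1).choose r : ℝ) := by
  refine le_trans ?_ (Nat.pow_le_choose r (⌊y⌋₊ + 1))
  have hfloor : y < ⌊y⌋₊ + 1 := Nat.lt_floor_add_one y
  have hr : r ≤ ⌊y⌋₊ + 1 + 1 := by
    have : (r : ℝ) < ⌊y⌋₊ + 1 + 1 := by linarith [(Nat.cast_nonneg r : (0 : ℝ) ≤ r)]
    exact_mod_cast this.le
  gcongr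
  · linarith [(Nat.cast_nonneg r : (0 : ℝ) ≤ r)]
  · push_cast [hr]
    linarith

lemma measureReal_exists_card_gt_rpow_le [IsProbabilityMeasure P] [DecidableEq β]
    (hmeas : ∀ i, Measurable (X i)) (hindep : iIndepFun X P)
    (hident : ∀ i, P.map (X i) = P.map (X 0)) (hS : ∀ n ω, S n ω = ∑ i ∈ range n, X i ω)
    (htrans : ∑' k, P {ω | S (k + 1) ω = 0} ≠ ∞) {ε : ℝ} {m n : ℕ} (hn : 1 ≤ n)
    (hlarge : 2 * (m + 1 : ℕ) ≤ (n : ℝ) ^ ε) :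
    P.real {ω | ∃ x, (n : ℝ) ^ ε < #{i ∈ Icc 1 n | S i ω = x}} ≤
      2 ^ (m + 2) * (m + 1).factorial * (∑' k, P {ω | S (k + 1) ω = 0}).toReal ^ m *
        (n : ℝ) ^ (1 - ε * (m + 1 : ℕ)) := by
  set y := (n : ℝ) ^ ε
  set K := (∑' k, P {ω | S (k + 1) ω = 0}).toReal ^ m
  set B := {ω | ∃ x, y < #{i ∈ Icc 1 n | S i ω = x}}
  have hy : 0 < y := by positivity
  have hsub : B ⊆ {ω | ∃ x, ⌊y⌋₊ + 1 ≤ #{i ∈ Icc 1 n | S i ω = x}} :=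
    fun ω ⟨x, hx⟩ ↦ ⟨x, (Nat.floor_lt hy.le).2 hx⟩
  have hmarkov : ((⌊y⌋₊ + 1).choose (m + 1) : ℝ) * P.real B ≤ (n + 1) * K := by
    have h := (mul_le_mul_right (measure_mono hsub) _).trans
      (choose_mul_measure_exists_card_ge_le hmeas hindep hident hS (⌊y⌋₊ + 1) m n)
    have h' := ENNReal.toReal_mono (by finiteness) h
    simpa [ENNReal.toReal_mul, measureReal_def, ENNReal.toReal_add] using h'
  have hrpow : (n : ℝ) ^ (1 - ε * (m + 1 : ℕ)) = n / y ^ (m + 1) := by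
    rw [Real.rpow_sub (by positivity), Real.rpow_one, Real.rpow_mul (by positivity),
      Real.rpow_natCast]
  rw [hrpow, mul_div_assoc', le_div_iff₀ (by positivity)]
  calc P.real B * y ^ (m + 1)
        = P.real B * ((y / 2) ^ (m + 1) / (m + 1).factorial) *
            (2 ^ (m + 1) * (m + 1).factorial) := by
        rw [div_pow]
        field_simp
    _ ≤ P.real B * ((⌊y⌋₊ + 1).choose (m + 1) : ℝ) * (2 ^ (m + 1) * (m + 1).factorial) := by
        gcongr
        exact pow_div_factorial_le_choose_floor_add_one hlarge
    _ ≤ (n + 1) * K * (2 ^ (m + 1) * (m + 1).factorial) :=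
        mul_le_mul_of_nonneg_right (by linarith) (by positivity)
    _ ≤ 2 * n * K * (2 ^ (m + 1) * (m + 1).factorial) := by
        gcongr
        have : (1 : ℝ) ≤ n := by exact_mod_cast hn
        linarith
    _ = 2 ^ (m + 2) * (m + 1).factorial * K * n := by ring

theorem ae_eventually_card_le_rpow [IsProbabilityMeasure P] [DecidableEq β]
    (hmeas : ∀ i, Measurable (X i)) (hindep : iIndepFun X P)
    (hident : ∀ i, P.map (X i) = P.map (X 0)) (hS : ∀ n ω, S n ω = ∑ i ∈ range n, X i ω)
    (htrans : ∑' k, P {ω | S (k + 1) ω = 0} ≠ ∞) {ε : ℝ} (hε : 0 < ε) :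
    ∀ᵐ ω ∂P, ∀ᶠ n in atTop, ∀ x, (#{i ∈ Icc 1 n | S i ω = x} : ℝ) ≤ (n : ℝ) ^ ε := by
  obtain ⟨m, hm⟩ := exists_nat_gt (2 / ε)
  set B : ℕ → Set Ω := fun n ↦ {ω | ∃ x, (n : ℝ) ^ ε < #{i ∈ Icc 1 n | S i ω = x}}
  have hexp : 1 - ε * (m + 1 : ℕ) < -1 := by
    rw [div_lt_iff₀ hε] at hm
    push_cast
    linarith
  have hlarge : ∀ᶠ n : ℕ in atTop, 1 ≤ n ∧ 2 * (m + 1 : ℕ) ≤ (n : ℝ) ^ ε :=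
    (eventually_ge_atTop 1).and
      (((tendsto_rpow_atTop hε).comp tendsto_natCast_atTop_atTop).eventually_ge_atTop _)
  have hsummable : Summable fun n ↦ P.real (B n) :=
    ((Real.summable_nat_rpow.2 hexp).mul_left _).of_norm_bounded_eventually_nat <|
      hlarge.mono fun n hn ↦ by
        rw [Real.norm_of_nonneg measureReal_nonneg]
        exact measureReal_exists_card_gt_rpow_le hmeas hindep hident hS htrans hn.1 hn.2
  have htsum : ∑' n, P (B n) ≠ ∞ := by
    have h := ENNReal.ofReal_tsum_of_nonneg (fun n ↦ measureReal_nonneg) hsummable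
    simp only [measureReal_def, ENNReal.ofReal_toReal (measure_ne_top P _)] at h
    exact h ▸ ENNReal.ofReal_ne_top
  filter_upwards [ae_eventually_notMem htsum] with ω hω
  filter_upwards [hω] with n hn
  simpa [B] using hn

end RandomWalk

theorem stmt_6_general
    {Ω : Type*} [MeasurableSpace Ω] (P : Measure Ω) [IsProbabilityMeasure P]
    (d : ℕ)
    (X : ℕ → Ω → (Fin d → ℤ))
    (hmeas : ∀ i, Measurable (X i))
    (hindep : iIndepFun X P)
    (hident : ∀ i, Measure.map (X i) P = Measure.map (X 0) P)
    (S : ℕ → Ω → (Fin d → ℤ))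
    (hS : ∀ n ω, S n ω = ∑ i ∈ Finset.range n, X i ω)
    (htrans : ∑' n : ℕ, P {ω | S (n + 1) ω = 0} < ⊤)
    (N : ℕ → (Fin d → ℤ) → Ω → ℝ)
    (hN : ∀ n x ω, N n x ω = ∑ i ∈ Finset.Icc 1 n, if S i ω = x then (1 : ℝ) else 0)
 :
    ∀ ε : ℝ, 0 < ε → ∀ᵐ ω ∂P, Tendsto
      (fun n : ℕ => (⨆ x : Fin d → ℤ, N n x ω) / (n : ℝ) ^ ε) atTop (nhds 0) := by
  intro ε hε
  filter_upwards [ae_eventually_card_le_rpow hmeas hindep hident hS htrans.ne (half_pos hε)]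
    with ω hω
  have hNcard (n : ℕ) (x : Fin d → ℤ) : N n x ω = #{i ∈ Icc 1 n | S i ω = x} := by
    rw [hN, sum_boole]
  have hdecay : Tendsto (fun n : ℕ ↦ (n : ℝ) ^ (-(ε / 2))) atTop (nhds 0) :=
    (tendsto_rpow_neg_atTop (half_pos hε)).comp tendsto_natCast_atTop_atTop
  refine squeeze_zero' (Eventually.of_forall fun n ↦ ?_) ?_ hdecay
  · exact div_nonneg (Real.iSup_nonneg fun x ↦ by rw [hNcard]; positivity) (by positivity)
  · filter_upwards [hω, eventually_gt_atTop 0] with n hn hn0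
    have hsup : (⨆ x, N n x ω) ≤ (n : ℝ) ^ (ε / 2) :=
      ciSup_le fun x ↦ (hNcard n x).trans_le (hn x)
    calc (⨆ x, N n x ω) / (n : ℝ) ^ ε ≤ (n : ℝ) ^ (ε / 2) / (n : ℝ) ^ ε := by gcongr
      _ = (n : ℝ) ^ (-(ε / 2)) := by
        rw [← Real.rpow_sub (Nat.cast_pos.2 hn0)]
        ring_nf

theorem stmt_6
    {Ω : Type*} [MeasurableSpace Ω] (P : Measure Ω) [IsProbabilityMeasure P]
    (d : ℕ) (hd : 1 ≤ d)
    (X : ℕ → Ω → (Fin d → ℤ))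
    (hmeas : ∀ i, Measurable (X i))
    (hindep : iIndepFun X P)
    (hident : ∀ i, Measure.map (X i) P = Measure.map (X 0) P)
    (S : ℕ → Ω → (Fin d → ℤ))
    (hS : ∀ n ω, S n ω = ∑ i ∈ Finset.range n, X i ω)
    (htrans : ∑' n : ℕ, P {ω | S (n + 1) ω = 0} < ⊤)
    (N : ℕ → (Fin d → ℤ) → Ω → ℝ)
    (hN : ∀ n x ω, N n x ω = ∑ i ∈ Finset.Icc 1 n, if S i ω = x then (1 : ℝ) else 0)
 :
    ∀ ε : ℝ, 0 < ε → ∀ᵐ ω ∂P, Tendsto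
      (fun n : ℕ => (⨆ x : Fin d → ℤ, N n x ω) / (n : ℝ) ^ ε) atTop (nhds 0) :=
  stmt_6_general P d X hmeas hindep hident S hS htrans N hN
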